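/- arXiv:1406.5460 — 7 statements merged into one kernel-verified Lean document; each statement's English description precedes it below -/
import Mathlib

section
/- If α is an automorphism of the free group F_n sending each generator x_i of a fixed free basis X to a palindrome on X, then for each i the palindrome α(x_i) has odd length; in particular α(x_i) = w^rev · σ(x_i)^{ε_i} · w for some word w on X^{±1}, a permutation σ of X, and ε_i ∈ {±1}. -/
/-- An element of a free group is a palindrome if its reduced word reads the
same backwards as forwards. -/
def IsPalindrome {n : ℕ} (g : FreeGroup (Fin n)) : Prop :=
  g.toWord.reverse = g.toWord

/-- The "reverse" of an element of a free group: the element whose reduced word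
is the reverse of the reduced word of `g`. -/
def wordReverse {n : ℕ} (g : FreeGroup (Fin n)) : FreeGroup (Fin n) :=
  FreeGroup.mk g.toWord.reverse

/-!
Counting the occurrences of a basis letter `x_k` mod 2 is a homomorphism `F_n → ℤ/2`. It kills
every even-length palindrome `u uʳᵉᵛ`, and on an odd-length palindrome `u c uʳᵉᵛ` it is nonzero
exactly when the middle letter `c` is `x_k^{±1}`. As `α` is onto and `x_k` is not killed, some
`α(x_j)` has odd length and middle letter `x_k^{±1}`. So the middle letter maps the odd-length
images onto the basis, which forces all `n` of them to have odd length and makes the middle letter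
a permutation `σ`; splitting `α(x_i)` at its middle gives the stated form.
-/

namespace List

variable {β : Type*}

def middle (L : List β) (h : Odd L.length) : β :=
  L[L.length / 2]'(Nat.div_lt_self h.pos one_lt_two)

theorem eq_take_append_reverse_take_of_reverse_eq {L : List β} (hL : L.reverse = L) {m : ℕ}
    (hm : L.length = 2 * m) : L = L.take m ++ (L.take m).reverse := by
  conv_lhs => rw [← take_append_drop m L]
  congr 1
  conv_lhs => rw [← hL]
  rw [drop_reverse, show L.length - m = m by omega]

theorem eq_take_append_middle_cons_reverse_take_of_reverse_eq {L : List β} (hL : L.reverse = L)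
    (h : Odd L.length) :
    L = L.take (L.length / 2) ++ L.middle h :: (L.take (L.length / 2)).reverse := by
  have hm := Nat.two_mul_div_two_add_one_of_odd h
  set m := L.length / 2
  conv_lhs => rw [← take_append_drop m L, drop_eq_getElem_cons (by omega)]
  congr 2
  conv_lhs => rw [← hL, drop_reverse]
  rw [show L.length - (m + 1) = m by omega]

theorem exists_odd_length_of_odd_countP {L : List β} (hL : L.reverse = L) {p : β → Bool}
    (h : Odd (L.countP p)) : ∃ hodd : Odd L.length, p (L.middle hodd) := by
  rcases Nat.even_or_odd L.length with ⟨m, hm⟩ | hodd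
  · rw [eq_take_append_reverse_take_of_reverse_eq hL (m := m) (by omega), countP_append,
      countP_reverse] at h
    exact (Nat.not_even_iff_odd.mpr h ⟨_, rfl⟩).elim
  · refine ⟨hodd, ?_⟩
    rw [eq_take_append_middle_cons_reverse_take_of_reverse_eq hL hodd, countP_append,
      countP_cons, countP_reverse, ← add_assoc] at h
    by_contra hp
    simp only [hp, if_false, add_zero] at h
    exact Nat.not_even_iff_odd.mpr h ⟨_, rfl⟩

end List

theorem Finite.forall_of_surjective_subtype {ι : Type*} [Finite ι] {p : ι → Prop}
    {f : Subtype p → ι} (hf : Function.Surjective f) (i : ι) : p i := by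
  have hinj := Subtype.val_injective.comp (Function.injective_surjInv hf)
  obtain ⟨j, rfl⟩ := Finite.injective_iff_surjective.mp hinj i
  exact (Function.surjInv hf j).2

namespace FreeGroup

variable {α : Type*}

theorem of_zpow_eq_mk (a : α) (b : Bool) :
    of a ^ (if b then (1 : ℤ) else -1) = mk [(a, b)] := by
  cases b <;> simp [of, inv_mk, invRev]

variable [DecidableEq α]

def letterParity (k : α) : FreeGroup α →* Multiplicative (ZMod 2) :=
  lift fun a => Multiplicative.ofAdd (if a = k then 1 else 0)

theorem letterParity_mk (k : α) (L : List (α × Bool)) :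
    letterParity k (mk L) = Multiplicative.ofAdd ((L.countP (·.1 = k) : ℕ) : ZMod 2) := by
  rw [letterParity, lift_mk]
  induction L with
  | nil => rfl
  | cons x L ih =>
    have hinv (a : ZMod 2) : (Multiplicative.ofAdd a)⁻¹ = Multiplicative.ofAdd a := by
      rw [← ofAdd_neg, ZMod.neg_eq_self_mod_two]
    rw [List.map_cons, List.prod_cons, ih, List.countP_cons, Nat.cast_add, ofAdd_add, mul_comm]
    cases x.2 <;> by_cases hx : x.1 = k <;> simp [hinv, hx]

theorem letterParity_apply (k : α) (g : FreeGroup α) :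
    letterParity k g = Multiplicative.ofAdd ((g.toWord.countP (·.1 = k) : ℕ) : ZMod 2) := by
  rw [← letterParity_mk, mk_toWord]

theorem exists_odd_countP_toWord_apply_of (φ : MulAut (FreeGroup α)) (k : α) :
    ∃ j, Odd ((φ (of j)).toWord.countP (·.1 = k)) := by
  by_contra! h
  have htriv : (letterParity k).comp φ.toMonoidHom = 1 := ext_hom _ _ fun j => by
    simp [letterParity_apply, ZMod.natCast_eq_zero_iff_even, Nat.not_odd_iff_even.mp (h j)]
  have := DFunLike.congr_fun htriv (φ.symm (of k))
  simp [letterParity] at this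

end FreeGroup

open FreeGroup

theorem IsPalindrome.eq_wordReverse_mul_zpow_mul {n : ℕ} {g : FreeGroup (Fin n)}
    (hg : IsPalindrome g) (hodd : Odd g.toWord.length) :
    ∃ (w : FreeGroup (Fin n)) (ε : ℤ), (ε = 1 ∨ ε = -1) ∧
      g = wordReverse w * of (g.toWord.middle hodd).1 ^ ε * w := by
  set c := g.toWord.middle hodd
  set u := g.toWord.take (g.toWord.length / 2)
  have hsplit : g.toWord = u ++ c :: u.reverse :=
    List.eq_take_append_middle_cons_reverse_take_of_reverse_eq hg hodd
  have hred : IsReduced u.reverse :=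
    (isReduced_toWord (x := g)).infix ⟨u ++ [c], [], by rw [hsplit]; simp⟩
  refine ⟨mk u.reverse, if c.2 then 1 else -1, by split_ifs <;> simp, ?_⟩
  rw [wordReverse, toWord_mk, hred.reduce_eq, List.reverse_reverse, of_zpow_eq_mk, mul_mk, mul_mk]
  conv_lhs => rw [← mk_toWord (x := g), hsplit]
  simp

/-- If `α ∈ Aut(F_n)` sends each generator to a palindrome, then each `α(x_i)`
has odd (reduced) length, and `α(x_i) = w^rev · σ(x_i)^{ε_i} · w` for some word
`w`, a permutation `σ` of the basis, and `ε_i ∈ {±1}`. -/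
theorem palindromic_automorphism_odd_form {n : ℕ}
    (α : MulAut (FreeGroup (Fin n)))
    (hα : ∀ i : Fin n, IsPalindrome (α (FreeGroup.of i))) :
    (∀ i : Fin n, Odd (α (FreeGroup.of i)).toWord.length) ∧
    ∃ σ : Equiv.Perm (Fin n), ∀ i : Fin n, ∃ (w : FreeGroup (Fin n)) (ε : ℤ),
      (ε = 1 ∨ ε = -1) ∧
      α (FreeGroup.of i) = wordReverse w * (FreeGroup.of (σ i)) ^ ε * w := by
  have hmiddle : ∀ k, ∃ j, ∃ hodd : Odd (α (of j)).toWord.length,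
      ((α (of j)).toWord.middle hodd).1 = k := fun k => by
    obtain ⟨j, hj⟩ := exists_odd_countP_toWord_apply_of α k
    obtain ⟨hodd, hk⟩ := List.exists_odd_length_of_odd_countP (hα j) hj
    exact ⟨j, hodd, of_decide_eq_true hk⟩
  have hodd : ∀ j, Odd (α (of j)).toWord.length :=
    Finite.forall_of_surjective_subtype (f := fun j => ((α (of j.1)).toWord.middle j.2).1)
      fun k => let ⟨j, hj, hk⟩ := hmiddle k; ⟨⟨j, hj⟩, hk⟩
  set σ : Fin n → Fin n := fun j => ((α (of j)).toWord.middle (hodd j)).1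
  have hσ : σ.Surjective := fun k => let ⟨j, _, hk⟩ := hmiddle k; ⟨j, hk⟩
  exact ⟨hodd, Equiv.ofBijective σ (Finite.surjective_iff_bijective.mp hσ),
    fun i => (hα i).eq_wordReverse_mul_zpow_mul (hodd i)⟩
end

section
/- Two palindromes of odd length in the free group F_n are conjugate if and only if they are equal. -/
namespace List

variable {β : Type*}

theorem rotate_mul_eq_self {l : List β} {n : ℕ} (h : l.rotate n = l) (j : ℕ) :
    l.rotate (n * j) = l := by
  induction j with
  | zero => simp
  | succ j ih => rw [Nat.mul_succ, ← rotate_rotate, ih, h]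

theorem IsRotated.eq_of_reverse_eq {l l' : List β} (h : l ~r l') (hodd : Odd l.length)
    (hl : l.reverse = l) (hl' : l'.reverse = l') : l = l' := by
  obtain ⟨r, rfl⟩ := h
  obtain ⟨m, hm⟩ := hodd
  have hk : 0 < l.length := by omega
  have h2r : l.rotate (r + r) = l := by
    have := congrArg (·.rotate r) hl'
    simp only [reverse_rotate, hl, rotate_rotate] at this
    rw [← this, show l.length - r % l.length + r = l.length * (r / l.length + 1) by
      have := Nat.mod_add_div r l.length
      have := Nat.mod_lt r hk
      rw [Nat.mul_add]; omega, rotate_length_mul]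
  calc l = l.rotate ((r + r) * (m + 1)) := (rotate_mul_eq_self h2r _).symm
    _ = l.rotate (l.length * r + r) := by rw [hm]; ring_nf
    _ = l.rotate r := by rw [← rotate_rotate, rotate_length_mul]

end List

namespace FreeGroup
open List

variable {α : Type*} {L W : List (α × Bool)}

def letterInv (a : α × Bool) : α × Bool := (a.1, !a.2)

@[simp] theorem letterInv_letterInv (a : α × Bool) : letterInv (letterInv a) = a := by
  simp [letterInv]

theorem letterInv_ne_self (a : α × Bool) : letterInv a ≠ a := by
  simp [letterInv, Prod.ext_iff]

theorem ne_letterInv_iff {a b : α × Bool} : b ≠ letterInv a ↔ (a.1 = b.1 → a.2 = b.2) := by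
  obtain ⟨x, s⟩ := a; obtain ⟨y, t⟩ := b
  simp only [letterInv, ne_eq, Prod.mk.injEq]
  cases s <;> cases t <;> simp [eq_comm]

@[simp] theorem invRev_singleton (a : α × Bool) : invRev [a] = [letterInv a] := rfl

theorem mk_letterInv (a : α × Bool) : mk [letterInv a] = (mk [a])⁻¹ := by
  rw [inv_mk, invRev_singleton]

theorem isCyclicallyReduced_iff_isReduced_append_self :
    IsCyclicallyReduced L ↔ IsReduced (L ++ L) := by
  simp [IsCyclicallyReduced, IsReduced, isChain_append]

theorem IsCyclicallyReduced.isRotated {L' : List (α × Bool)} (h : IsCyclicallyReduced L)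
    (hL : L ~r L') : IsCyclicallyReduced L' := by
  obtain ⟨n, rfl⟩ := hL
  rcases eq_or_ne L [] with rfl | hne
  · simp
  rw [isCyclicallyReduced_iff_isReduced_append_self] at h ⊢
  have h3 : IsReduced (L ++ L ++ L) := h.append_overlap h hne
  obtain ⟨p, q, hpq, hrot⟩ : ∃ p q, L = p ++ q ∧ L.rotate n = q ++ p :=
    ⟨_, _, (take_append_drop _ L).symm, rotate_eq_drop_append_take_mod⟩
  rw [hrot]
  exact h3.infix ⟨p, q, by simp [hpq]⟩

theorem isCyclicallyReduced_of_reverse_eq (h : IsReduced L) (hL : L.reverse = L) :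
    IsCyclicallyReduced L := by
  refine ⟨h, fun a ha b hb _ => ?_⟩
  rw [← head?_reverse, hL, hb, Option.mem_some_iff] at ha
  rw [ha]

theorem IsReduced.cons_append_letterInv (h : IsReduced W) (hW : W ≠ []) (a : α × Bool)
    (hhead : ∀ b ∈ W.head?, b ≠ letterInv a) (hlast : ∀ b ∈ W.getLast?, b ≠ a) :
    IsReduced (a :: (W ++ [letterInv a])) := by
  refine isChain_cons.2 ⟨?_, isChain_append.2 ⟨h, isChain_singleton _, ?_⟩⟩
  · rw [head?_append_of_ne_nil _ hW]
    exact fun b hb => ne_letterInv_iff.1 (hhead b hb)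
  · intro b hb c hc
    rw [head?_singleton, Option.mem_some_iff] at hc
    subst hc
    refine ne_letterInv_iff.1 fun hab => hlast b hb ?_
    simpa using congrArg letterInv hab.symm

theorem mk_cons (a : α × Bool) (L : List (α × Bool)) : mk (a :: L) = mk [a] * mk L := by
  rw [mul_mk]; rfl

section DecidableEq

variable [DecidableEq α]

theorem toWord_mk_of_isReduced (h : IsReduced L) : (mk L).toWord = L := by
  rw [toWord_mk, h.reduce_eq]

theorem toWord_conj_singleton {u : FreeGroup α} (hu : u ≠ 1) (a : α × Bool)
    (hhead : ∀ b ∈ u.toWord.head?, b ≠ letterInv a) (hlast : ∀ b ∈ u.toWord.getLast?, b ≠ a) :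
    (mk [a] * u * (mk [a])⁻¹).toWord = a :: (u.toWord ++ [letterInv a]) := by
  conv_lhs => rw [← mk_toWord (x := u), ← mk_letterInv, mul_mk, mul_mk]
  refine toWord_mk_of_isReduced ?_
  exact isReduced_toWord.cons_append_letterInv (by simpa using hu) a hhead hlast

theorem isRotated_toWord_conj_singleton {u : FreeGroup α} (hu : IsCyclicallyReduced u.toWord)
    (a : α × Bool) (hcancel : u.toWord.head? = some (letterInv a) ∨ u.toWord.getLast? = some a) :
    (mk [a] * u * (mk [a])⁻¹).toWord ~r u.toWord := by
  have hu_mk : u = mk u.toWord := mk_toWord.symm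
  rw [head?_eq_some_iff, getLast?_eq_some_iff] at hcancel
  rcases hcancel with ⟨t, ht⟩ | ⟨s, hs⟩
  · have hconj : mk [a] * u * (mk [a])⁻¹ = mk (t ++ [letterInv a]) := by
      have hu_t : u = (mk [a])⁻¹ * mk t := by rw [hu_mk, ht, ← mk_letterInv, mul_mk]; rfl
      rw [hu_t, ← mul_mk, mk_letterInv]; group
    have hrot : t ++ [letterInv a] ~r u.toWord := ht ▸ isRotated_concat _ _
    rw [hconj, toWord_mk_of_isReduced (hu.isRotated hrot.symm).isReduced]
    exact hrot
  · have hconj : mk [a] * u * (mk [a])⁻¹ = mk (a :: s) := by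
      have hu_s : u = mk s * mk [a] := by rw [hu_mk, hs, mul_mk]
      rw [hu_s, show a :: s = [a] ++ s from rfl, ← mul_mk]; group
    have hrot : a :: s ~r u.toWord := hs ▸ IsRotated.cons_append_singleton
    rw [hconj, toWord_mk_of_isReduced (hu.isRotated hrot.symm).isReduced]
    exact hrot

def HasCyclicReduction (u : FreeGroup α) (v : List (α × Bool)) : Prop :=
  ∃ z v', v' ~r v ∧ u.toWord = z ++ v' ++ invRev z

theorem HasCyclicReduction.conj_singleton {u : FreeGroup α} {v : List (α × Bool)}
    (hv : IsCyclicallyReduced v) (hv₀ : v ≠ []) (hu : HasCyclicReduction u v) (a : α × Bool) :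
    HasCyclicReduction (mk [a] * u * (mk [a])⁻¹) v := by
  obtain ⟨z, v', hv', hu⟩ := hu
  have hv'₀ : v' ≠ [] := by rintro rfl; exact hv₀ (isRotated_nil_iff'.1 hv').symm
  have hu₁ : u ≠ 1 := by rw [ne_eq, ← toWord_eq_nil_iff, hu]; simp [hv'₀]
  by_cases hcancel : u.toWord.head? = some (letterInv a) ∨ u.toWord.getLast? = some a
  swap
  · push Not at hcancel
    refine ⟨a :: z, v', hv', ?_⟩
    rw [toWord_conj_singleton hu₁ a (fun b hb hba => hcancel.1 (hba ▸ hb))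
      (fun b hb hba => hcancel.2 (hba ▸ hb)), hu, invRev_cons, invRev_singleton]
    simp only [cons_append, append_assoc]
  rcases z with _ | ⟨c, z'⟩
  · rw [nil_append, invRev_empty, append_nil] at hu
    refine ⟨[], _, (isRotated_toWord_conj_singleton ?_ a hcancel).trans (hu ▸ hv'), by simp⟩
    exact hu ▸ hv.isRotated hv'.symm
  · set M := z' ++ v' ++ invRev z'
    have hu' : u.toWord = [c] ++ M ++ [letterInv c] := by
      rw [hu, invRev_cons, invRev_singleton]; simp [M]
    have hc : c = letterInv a := by
      rcases hcancel with h | h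
      · simpa [hu'] using h
      · rw [hu', getLast?_concat, Option.some_inj] at h
        rw [← h, letterInv_letterInv]
    subst hc
    refine ⟨z', v', hv', ?_⟩
    have hconj : mk [a] * u * (mk [a])⁻¹ = mk M := by
      rw [← mk_toWord (x := u), hu', ← mul_mk, ← mul_mk, mk_letterInv, letterInv_letterInv]
      group
    have hM : IsReduced M := (isReduced_toWord (x := u)).infix ⟨[letterInv a], [a], by simp [hu']⟩
    rw [hconj, toWord_mk_of_isReduced hM]

theorem HasCyclicReduction.conj {u : FreeGroup α} {v : List (α × Bool)}
    (hv : IsCyclicallyReduced v) (hv₀ : v ≠ []) (hu : HasCyclicReduction u v) (x : FreeGroup α) :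
    HasCyclicReduction (x * u * x⁻¹) v := by
  rw [← mk_toWord (x := x)]
  induction x.toWord with
  | nil => simpa [← one_eq_mk] using hu
  | cons a L ih =>
    rw [mk_cons, mul_inv_rev, show mk [a] * mk L * u * ((mk L)⁻¹ * (mk [a])⁻¹)
      = mk [a] * (mk L * u * (mk L)⁻¹) * (mk [a])⁻¹ by group]
    exact ih.conj_singleton hv hv₀ a

theorem HasCyclicReduction.of_isConj {g h : FreeGroup α} (hg : IsCyclicallyReduced g.toWord)
    (hg₁ : g ≠ 1) (hgh : IsConj g h) : HasCyclicReduction h g.toWord := by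
  obtain ⟨x, rfl⟩ := isConj_iff.1 hgh
  refine HasCyclicReduction.conj hg (by simpa using hg₁) ⟨[], g.toWord, IsRotated.refl _, ?_⟩ x
  simp

theorem HasCyclicReduction.isRotated_of_reverse_eq {u : FreeGroup α} {v : List (α × Bool)}
    (hu : HasCyclicReduction u v) (hrev : u.toWord.reverse = u.toWord) : u.toWord ~r v := by
  obtain ⟨z, v', hv', hu⟩ := hu
  rcases z with _ | ⟨c, z'⟩
  · simpa [hu] using hv'
  · have hends : u.toWord.getLast? = u.toWord.head? := by rw [← head?_reverse, hrev]
    rw [hu, invRev_cons, invRev_singleton, ← append_assoc, getLast?_concat] at hends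
    exact absurd (Option.some_inj.1 hends) (by simpa using letterInv_ne_self c)

end DecidableEq

end FreeGroup

theorem odd_palindromes_conj_iff_eq_general {n : ℕ} (g h : FreeGroup (Fin n))
    (hg : IsPalindrome g) (hh : IsPalindrome h)
    (hgodd : Odd g.toWord.length) :
    IsConj g h ↔ g = h := by
  refine ⟨fun hgh => ?_, fun hgh => hgh ▸ IsConj.refl g⟩
  have hg₁ : g ≠ 1 := by rintro rfl; simp at hgodd
  have hgcr := FreeGroup.isCyclicallyReduced_of_reverse_eq FreeGroup.isReduced_toWord hg
  have hrot := (FreeGroup.HasCyclicReduction.of_isConj hgcr hg₁ hgh).isRotated_of_reverse_eq hh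
  exact FreeGroup.toWord_injective (hrot.symm.eq_of_reverse_eq hgodd hg hh)

/-- Two palindromes of odd length in a free group are conjugate iff they are
equal. -/
theorem odd_palindromes_conj_iff_eq {n : ℕ} (g h : FreeGroup (Fin n))
    (hg : IsPalindrome g) (hh : IsPalindrome h)
    (hgodd : Odd g.toWord.length) (hhodd : Odd h.toWord.length) :
    IsConj g h ↔ g = h :=
  odd_palindromes_conj_iff_eq_general g h hg hh hgodd
end

section
/- The principal level 2 congruence subgroup Γ_n[2] of GL(n,ℤ) is generated by the matrices S_ij (1 ≤ i ≠ j ≤ n) and O_i (1 ≤ i ≤ n). -/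
/-- The principal level 2 congruence subgroup of `GL(n, ℤ)`: the kernel of
reduction of matrix entries mod 2. -/
def congruence2 (n : ℕ) : Subgroup (GL (Fin n) ℤ) :=
  (Matrix.GeneralLinearGroup.map (Int.castRingHom (ZMod 2))).ker

/-- `S i j`: 1s on the diagonal, 2 in position `(i,j)`, 0s elsewhere. -/
def Smat {n : ℕ} (i j : Fin n) : Matrix (Fin n) (Fin n) ℤ :=
  1 + 2 • Matrix.single i j 1

/-- `O i`: identity except for `-1` in position `(i,i)`. -/
def Omat {n : ℕ} (i : Fin n) : Matrix (Fin n) (Fin n) ℤ :=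
  1 - 2 • Matrix.single i i 1

/-!
Row reduction with even multipliers. A matrix in `Γ_n[2]` has odd diagonal and even off-diagonal
entries, so in a column the pivot and any other entry have distinct absolute values, and adding an
even multiple `2t` of the row holding the smaller one to the row holding the larger one makes the
larger one smaller than the smaller one (division with remainder by `2a`; parity rules out the
tie). Taking source rows only from the pivot down leaves the columns already reduced untouched.
Once everything below the pivot vanishes the pivot is a unit, hence `±1`, so it also clears the
even entries above it, and an `O_K` fixes its sign. Column by column, `g` becomes the identity.
-/

open Matrix

theorem Int.exists_natAbs_add_two_mul_lt {a x : ℤ} (ha : a ≠ 0) (hodd : Odd (x + a)) :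
    ∃ t, (x + 2 * a * t).natAbs < a.natAbs := by
  -- `t` moves `x + 2 * a * t` into `[-|a|, |a|)`; parity excludes the endpoint `-|a|`.
  have h2a : 2 * a ≠ 0 := by omega
  have hdiv := Int.mul_ediv_add_emod (x + a.natAbs) (2 * a)
  have hlt := Int.emod_lt (x + a.natAbs) h2a
  have hnonneg := Int.emod_nonneg (x + a.natAbs) h2a
  rw [Int.odd_iff] at hodd
  refine ⟨-((x + a.natAbs) / (2 * a)), ?_⟩
  generalize (x + a.natAbs) / (2 * a) = q at *
  generalize (x + a.natAbs) % (2 * a) = r at *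
  rw [mul_neg, mul_assoc] at *
  generalize a * q = s at *
  omega

namespace Matrix

theorem SpecialLinearGroup.transvection_zsmul {ι F : Type*} [DecidableEq ι] [Fintype ι]
    [CommRing F] {i j : ι} (hij : i ≠ j) (t : ℤ) (b : F) :
    transvection hij (t • b) = transvection hij b ^ t := by
  induction t using Int.induction_on with
  | zero => simp
  | succ k ih => rw [add_smul, one_smul, transvection_add, ih, _root_.zpow_add_one]
  | pred k ih =>
    rw [sub_smul, one_smul, sub_eq_add_neg, transvection_add, ih, ← transvection_inv,
      _root_.zpow_sub_one]

section colAbsSum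

variable {m ι : Type*} [Fintype m] [DecidableEq m]

def colAbsSum (M : Matrix m ι ℤ) (c : ι) : ℕ :=
  ∑ r, (M r c).natAbs

theorem colAbsSum_lt_colAbsSum {M N : Matrix m ι ℤ} {q : m} {c : ι}
    (hq : (N q c).natAbs < (M q c).natAbs) (hr : ∀ r, r ≠ q → N r c = M r c) :
    colAbsSum N c < colAbsSum M c :=
  Finset.sum_lt_sum (fun r _ => by by_cases h : r = q <;> simp_all [le_of_lt])
    ⟨q, Finset.mem_univ q, hq⟩

theorem exists_colAbsSum_transvection_mul_lt {M : Matrix m ι ℤ} {p q : m} {c : ι}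
    (hp : M p c ≠ 0) (hodd : Odd (M q c + M p c)) (hle : (M p c).natAbs ≤ (M q c).natAbs) :
    ∃ t : ℤ, colAbsSum (transvection q p (2 * t) * M) c < colAbsSum M c := by
  obtain ⟨t, ht⟩ := Int.exists_natAbs_add_two_mul_lt hp hodd
  refine ⟨t, colAbsSum_lt_colAbsSum ?_ fun r hr => transvection_mul_apply_of_ne q p r c hr _ M⟩
  rw [transvection_mul_apply_same, mul_right_comm]
  omega

end colAbsSum

section FirstColsEqOne

variable {n : ℕ} {R : Type*} [CommRing R]

def FirstColsEqOne (k : ℕ) (M : Matrix (Fin n) (Fin n) R) : Prop :=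
  ∀ r c : Fin n, c.val < k → M r c = (1 : Matrix (Fin n) (Fin n) R) r c

namespace FirstColsEqOne

variable {k : ℕ} {M : Matrix (Fin n) (Fin n) R}

theorem mul_apply (hM : FirstColsEqOne k M) (N : Matrix (Fin n) (Fin n) R) (r : Fin n)
    {c : Fin n} (hc : c.val < k) : (N * M) r c = N r c := by
  simp [Matrix.mul_apply, hM _ c hc, one_apply]

theorem transvection_mul (hM : FirstColsEqOne k M) {i j : Fin n} (hj : k ≤ j.val) (b : R) :
    FirstColsEqOne k (transvection i j b * M) := by
  intro r c hc
  by_cases hr : r = i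
  · have hjc : j ≠ c := fun h => by omega
    rw [hr, transvection_mul_apply_same, hM i c hc, hM j c hc, one_apply_ne hjc, mul_zero,
      add_zero]
  · rw [transvection_mul_apply_of_ne _ _ _ _ hr, hM r c hc]

theorem inv {g : GL (Fin n) R} (hg : FirstColsEqOne k g.val) : FirstColsEqOne k g⁻¹.val := by
  intro r c hc
  rw [← hg.mul_apply g⁻¹.val r hc, g.inv_mul]

theorem isUnit_apply_self {g : GL (Fin n) R} {K : Fin n} (hg : FirstColsEqOne K.val g.val)
    (hcol : ∀ r, K ≤ r → r ≠ K → g r K = 0) : IsUnit (g K K) := by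
  have hKK := congrFun (congrFun g.inv_mul K) K
  rw [Matrix.mul_apply, Finset.sum_eq_single K, one_apply_eq] at hKK
  · exact IsUnit.of_mul_eq_one_right _ hKK
  · intro r _ hrK
    rcases lt_or_ge r K with hr | hr
    · rw [hg.inv K r hr, one_apply_ne (Ne.symm hrK), zero_mul]
    · rw [hcol r hr hrK, mul_zero]
  · simp

theorem succ {K : Fin n} (hM : FirstColsEqOne K.val M)
    (hcol : ∀ r, M r K = (1 : Matrix (Fin n) (Fin n) R) r K) : FirstColsEqOne (K.val + 1) M := by
  intro r c hc
  rcases Nat.lt_succ_iff_lt_or_eq.mp hc with hc | hc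
  · exact hM r c hc
  · rw [Fin.ext hc, hcol]

theorem eq_one (hM : FirstColsEqOne n M) : M = 1 :=
  Matrix.ext fun r c => hM r c c.isLt

end FirstColsEqOne

end FirstColsEqOne

end Matrix

section congruence2

variable {n : ℕ}

def congruence2Gens (n : ℕ) : Set (GL (Fin n) ℤ) :=
  {g | (∃ i j : Fin n, i ≠ j ∧ (g : Matrix (Fin n) (Fin n) ℤ) = Smat i j) ∨
    (∃ i : Fin n, (g : Matrix (Fin n) (Fin n) ℤ) = Omat i)}

theorem Smat_eq_transvection (i j : Fin n) : Smat i j = transvection i j 2 := by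
  simp [Smat, transvection]

theorem Omat_eq_transvection (i : Fin n) : Omat i = transvection i i (-2) := by
  simp [Omat, transvection, sub_eq_add_neg, single_neg]

theorem Omat_mul_self (i : Fin n) : Omat i * Omat i = 1 := by
  rw [Omat_eq_transvection]
  simp only [transvection, mul_add, add_mul, mul_one, one_mul, single_mul_single_same]
  rw [add_assoc, ← single_add, ← single_add]
  norm_num

def omatGL (i : Fin n) : GL (Fin n) ℤ :=
  ⟨Omat i, Omat i, Omat_mul_self i, Omat_mul_self i⟩

theorem omatGL_mem_closure (i : Fin n) : omatGL i ∈ Subgroup.closure (congruence2Gens n) :=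
  Subgroup.subset_closure (Or.inr ⟨i, rfl⟩)

theorem transvection_two_mul_mem_closure {i j : Fin n} (hij : i ≠ j) (t : ℤ) :
    (SpecialLinearGroup.transvection hij (2 * t) : GL (Fin n) ℤ) ∈
      Subgroup.closure (congruence2Gens n) := by
  have hgen : (SpecialLinearGroup.transvection hij (2 : ℤ) : GL (Fin n) ℤ) ∈ congruence2Gens n :=
    Or.inl ⟨i, j, hij, (Smat_eq_transvection i j).symm⟩
  rw [show 2 * t = t • (2 : ℤ) from mul_comm 2 t, SpecialLinearGroup.transvection_zsmul, map_zpow]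
  exact zpow_mem (Subgroup.subset_closure hgen) t

theorem mem_congruence2_iff {g : GL (Fin n) ℤ} :
    g ∈ congruence2 n ↔ ∀ i j, (g i j : ZMod 2) = (1 : Matrix (Fin n) (Fin n) (ZMod 2)) i j := by
  rw [congruence2, MonoidHom.mem_ker, Units.ext_iff, ← Matrix.ext_iff]
  simp [GeneralLinearGroup.map_apply]

theorem closure_congruence2Gens_le : Subgroup.closure (congruence2Gens n) ≤ congruence2 n := by
  rw [Subgroup.closure_le]
  rintro g (⟨i, j, -, hg⟩ | ⟨i, hg⟩) <;> rw [SetLike.mem_coe, mem_congruence2_iff, hg] <;>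
    intro r c
  · simp [Smat, one_apply, single_apply, (by decide : (2 : ZMod 2) = 0)]
  · simp [Omat, one_apply, single_apply, (by decide : (2 : ZMod 2) = 0)]

theorem odd_apply_self_of_mem_congruence2 {g : GL (Fin n) ℤ} (hg : g ∈ congruence2 n)
    (i : Fin n) : Odd (g i i) :=
  ZMod.intCast_eq_one_iff_odd.mp (by simpa using mem_congruence2_iff.mp hg i i)

theorem odd_apply_add_apply_self_of_mem_congruence2 {g : GL (Fin n) ℤ} (hg : g ∈ congruence2 n)
    {r K : Fin n} (hr : r ≠ K) : Odd (g r K + g K K) :=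
  (ZMod.intCast_eq_zero_iff_even.mp (by simpa [hr] using mem_congruence2_iff.mp hg r K)).add_odd
    (odd_apply_self_of_mem_congruence2 hg K)

theorem exists_reducible_pair {g : GL (Fin n) ℤ} (hg : g ∈ congruence2 n) {K : Fin n}
    (hK : FirstColsEqOne K.val g.val) (hne : ∃ r ≠ K, g r K ≠ 0) :
    ∃ p q, K ≤ p ∧ q ≠ p ∧ g p K ≠ 0 ∧ Odd (g q K + g p K) ∧
      (g p K).natAbs ≤ (g q K).natAbs := by
  have hKK : g K K ≠ 0 := fun h0 => by simpa [h0] using odd_apply_self_of_mem_congruence2 hg K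
  by_cases hlow : ∃ r, K ≤ r ∧ r ≠ K ∧ g r K ≠ 0
  · obtain ⟨r, hr, hrK, hr0⟩ := hlow
    have hodd := odd_apply_add_apply_self_of_mem_congruence2 hg hrK
    rcases le_total (g r K).natAbs (g K K).natAbs with hle | hle
    · exact ⟨r, K, hr, hrK.symm, hr0, by rwa [add_comm], hle⟩
    · exact ⟨K, r, le_rfl, hrK, hKK, hodd, hle⟩
  · push Not at hlow
    obtain ⟨r, hrK, hr0⟩ := hne
    refine ⟨K, r, le_rfl, hrK, hKK, odd_apply_add_apply_self_of_mem_congruence2 hg hrK, ?_⟩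
    rw [Int.isUnit_iff_natAbs_eq.mp (hK.isUnit_apply_self hlow)]
    omega

theorem exists_mem_closure_colAbsSum_lt {g : GL (Fin n) ℤ} (hg : g ∈ congruence2 n) {K : Fin n}
    (hK : FirstColsEqOne K.val g.val) (hne : ∃ r ≠ K, g r K ≠ 0) :
    ∃ h ∈ Subgroup.closure (congruence2Gens n),
      FirstColsEqOne K.val (h * g).val ∧ colAbsSum (h * g).val K < colAbsSum g.val K := by
  obtain ⟨p, q, hp, hqp, hp0, hodd, hle⟩ := exists_reducible_pair hg hK hne
  obtain ⟨t, ht⟩ := exists_colAbsSum_transvection_mul_lt hp0 hodd hle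
  exact ⟨_, transvection_two_mul_mem_closure hqp t, hK.transvection_mul hp _, ht⟩

theorem exists_mem_closure_col_eq_zero {g : GL (Fin n) ℤ} (hg : g ∈ congruence2 n) {K : Fin n}
    (hK : FirstColsEqOne K.val g.val) :
    ∃ h ∈ Subgroup.closure (congruence2Gens n),
      FirstColsEqOne K.val (h * g).val ∧ ∀ r ≠ K, (h * g) r K = 0 := by
  induction hN : colAbsSum g.val K using Nat.strong_induction_on generalizing g with
  | _ N ih =>
  by_cases hcol : ∀ r ≠ K, g r K = 0
  · exact ⟨1, one_mem _, by rwa [one_mul], by rwa [one_mul]⟩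
  push Not at hcol
  obtain ⟨h, hh, hK', hlt⟩ := exists_mem_closure_colAbsSum_lt hg hK hcol
  obtain ⟨h', hh', hK'', hcol'⟩ :=
    ih _ (hN ▸ hlt) (mul_mem (closure_congruence2Gens_le hh) hg) hK' rfl
  exact ⟨h' * h, mul_mem hh' hh, by rwa [mul_assoc], by rwa [mul_assoc]⟩

theorem exists_mem_closure_firstColsEqOne_succ {g : GL (Fin n) ℤ} (hg : g ∈ congruence2 n)
    {K : Fin n} (hK : FirstColsEqOne K.val g.val) :
    ∃ h ∈ Subgroup.closure (congruence2Gens n), FirstColsEqOne (K.val + 1) (h * g).val := by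
  obtain ⟨h, hh, hK', hcol⟩ := exists_mem_closure_col_eq_zero hg hK
  rcases Int.isUnit_iff.mp (hK'.isUnit_apply_self fun r _ hr => hcol r hr) with hone | hneg
  · refine ⟨h, hh, hK'.succ fun r => ?_⟩
    by_cases hr : r = K
    · rw [hr, hone, one_apply_eq]
    · rw [hcol r hr, one_apply_ne hr]
  · refine ⟨omatGL K * h, mul_mem (omatGL_mem_closure K) hh, ?_⟩
    have hM : (omatGL K * h * g).val = transvection K K (-2) * (h * g).val := by
      rw [mul_assoc, GeneralLinearGroup.coe_mul, ← Omat_eq_transvection]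
      rfl
    rw [hM]
    refine (hK'.transvection_mul le_rfl _).succ fun r => ?_
    by_cases hr : r = K
    · rw [hr, transvection_mul_apply_same, hneg, one_apply_eq]
      norm_num
    · rw [transvection_mul_apply_of_ne _ _ _ _ hr, hcol r hr, one_apply_ne hr]

theorem exists_mem_closure_firstColsEqOne {g : GL (Fin n) ℤ} (hg : g ∈ congruence2 n) :
    ∀ k ≤ n, ∃ h ∈ Subgroup.closure (congruence2Gens n), FirstColsEqOne k (h * g).val
  | 0, _ => ⟨1, one_mem _, fun _ _ hc => absurd hc (Nat.not_lt_zero _)⟩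
  | k + 1, hk => by
    obtain ⟨h, hh, hk'⟩ := exists_mem_closure_firstColsEqOne hg k (by omega)
    obtain ⟨h', hh', hk''⟩ := exists_mem_closure_firstColsEqOne_succ (K := ⟨k, hk⟩)
      (mul_mem (closure_congruence2Gens_le hh) hg) hk'
    exact ⟨h' * h, mul_mem hh' hh, by rwa [mul_assoc]⟩

theorem congruence2_le_closure : congruence2 n ≤ Subgroup.closure (congruence2Gens n) := by
  intro g hg
  obtain ⟨h, hh, hone⟩ := exists_mem_closure_firstColsEqOne hg n le_rfl
  rw [eq_inv_of_mul_eq_one_right (Units.ext hone.eq_one)]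
  exact inv_mem hh

end congruence2

/-- The principal level 2 congruence subgroup `Γ_n[2]` is generated by the
matrices `S_ij` (`i ≠ j`) and `O_i`. -/
theorem congruence2_generated_by_S_O (n : ℕ) :
    Subgroup.closure
      {g : GL (Fin n) ℤ |
        (∃ i j : Fin n, i ≠ j ∧ (g : Matrix (Fin n) (Fin n) ℤ) = Smat i j) ∨
        (∃ i : Fin n, (g : Matrix (Fin n) (Fin n) ℤ) = Omat i)} =
      congruence2 n :=
  le_antisymm closure_congruence2Gens_le congruence2_le_closure
end

section
/- Every column vector u ∈ ℤ^n that is the first column of a matrix in Γ_n[2] (i.e., u is unimodular, u_1 is odd, and u_i is even for i ≥ 2) can be reduced to ±e_1 by a sequence of even row operations (adding an even multiple of one entry to another). -/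
/-- One even row operation on a vector: add an even multiple of the `j`th entry
to the `i`th entry (`i ≠ j`). -/
def EvenRowOpStep {n : ℕ} (u v : Fin n → ℤ) : Prop :=
  ∃ (i j : Fin n) (k : ℤ), i ≠ j ∧
    v = Function.update u i (u i + 2 * k * u j)

/-!
An even row operation changes neither the residues mod 2 nor the ideal generated by the
entries, so `u` stays `≡ e₁ (mod 2)` and unimodular. While some `u i` with `i ≠ 0` is nonzero,
`u 0` and `u i` have opposite parity, and reducing the one of larger absolute value by an even
multiple of the other (balanced remainder) strictly lowers `∑ |u t|`. When the descent stops,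
`u = (u 0) • e₁` with `u 0` a unit.
-/

theorem Int.exists_natAbs_add_two_mul_mul_lt {x y : ℤ} (hy : y ≠ 0) (hxy : Odd (x + y)) :
    ∃ k, (x + 2 * k * y).natAbs < y.natAbs := by
  wlog hpos : 0 < y generalizing y
  · obtain ⟨m, hm⟩ := hxy
    obtain ⟨k, hk⟩ := this (y := -y) (by omega) ⟨m - y, by omega⟩ (by omega)
    exact ⟨-k, by simpa using hk⟩
  obtain ⟨m, hm⟩ := hxy
  set q := (x + y) / (2 * y)
  set r := (x + y) % (2 * y)
  have hdiv : r + q * (2 * y) = x + y := Int.emod_add_ediv_mul (x + y) (2 * y)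
  have hr0 : 0 ≤ r := Int.emod_nonneg (x + y) (by omega)
  have hr1 : r < 2 * y := Int.emod_lt_of_pos (x + y) (by omega)
  -- `x + 2(-q)y = r - y ∈ [-y, y)`, and `r` odd rules out `r - y = -y`.
  have hr_odd : r = 2 * (m - q * y) + 1 := by linarith
  refine ⟨-q, ?_⟩
  rw [show x + 2 * -q * y = r - y by linarith]
  omega

theorem Ideal.isUnit_of_span_range_eq_top {ι R : Type*} [CommSemiring R] {u : ι → R} {i : ι}
    (hspan : Ideal.span (Set.range u) = ⊤) (hu : ∀ j ≠ i, u j = 0) : IsUnit (u i) := by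
  rw [← Ideal.span_singleton_eq_top, eq_top_iff, ← hspan]
  refine Ideal.span_le.mpr ?_
  rintro _ ⟨j, rfl⟩
  obtain rfl | hj := eq_or_ne j i
  · exact Ideal.mem_span_singleton_self _
  · simp [hu j hj]

theorem Matrix.GeneralLinearGroup.span_range_col_eq_top {ι R : Type*} [Fintype ι]
    [DecidableEq ι] [CommRing R] (g : GL ι R) (j : ι) :
    Ideal.span (Set.range fun i => (g : Matrix ι ι R) i j) = ⊤ := by
  rw [Ideal.eq_top_iff_one, Ideal.mem_span_range_iff_exists_fun]
  refine ⟨fun i => (↑g⁻¹ : Matrix ι ι R) j i, ?_⟩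
  rw [← Matrix.mul_apply, ← Matrix.GeneralLinearGroup.coe_mul, inv_mul_cancel,
    Matrix.GeneralLinearGroup.coe_one, Matrix.one_apply_eq]

theorem cast_col_of_mem_congruence2 {n : ℕ} {g : GL (Fin n) ℤ} (hg : g ∈ congruence2 n)
    (j : Fin n) :
    (fun i => ((g : Matrix (Fin n) (Fin n) ℤ) i j : ZMod 2)) = Pi.single j 1 := by
  funext i
  have hmap : (Matrix.GeneralLinearGroup.map (Int.castRingHom (ZMod 2)) g :
      Matrix (Fin n) (Fin n) (ZMod 2)) = 1 := by
    rw [MonoidHom.mem_ker.mp hg, Units.val_one]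
  simpa [Matrix.one_apply, Pi.single_apply] using congrFun (congrFun hmap i) j

namespace EvenRowOpStep

variable {n : ℕ} {u v : Fin n → ℤ}

theorem symm (h : EvenRowOpStep u v) : EvenRowOpStep v u := by
  obtain ⟨i, j, k, hij, rfl⟩ := h
  refine ⟨i, j, -k, hij, ?_⟩
  simp [Function.update_of_ne hij.symm]

theorem cast_zmod_two_eq (h : EvenRowOpStep u v) :
    (fun t => (v t : ZMod 2)) = fun t => (u t : ZMod 2) := by
  obtain ⟨i, j, k, -, rfl⟩ := h
  funext t
  obtain rfl | ht := eq_or_ne t i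
  · have : (2 : ZMod 2) = 0 := rfl
    simp [this]
  · simp [Function.update_of_ne ht]

theorem span_range_le (h : EvenRowOpStep u v) :
    Ideal.span (Set.range v) ≤ Ideal.span (Set.range u) := by
  obtain ⟨i, j, k, -, rfl⟩ := h
  refine Ideal.span_le.mpr ?_
  rintro _ ⟨t, rfl⟩
  have hmem : ∀ s, u s ∈ Ideal.span (Set.range u) := fun s => Ideal.subset_span ⟨s, rfl⟩
  obtain rfl | ht := eq_or_ne t i
  · simpa using Ideal.add_mem _ (hmem t) (Ideal.mul_mem_left _ (2 * k) (hmem j))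
  · simpa [Function.update_of_ne ht] using hmem t

theorem span_range_eq (h : EvenRowOpStep u v) :
    Ideal.span (Set.range v) = Ideal.span (Set.range u) :=
  le_antisymm h.span_range_le h.symm.span_range_le

end EvenRowOpStep

theorem exists_evenRowOpStep_sum_natAbs_lt {n : ℕ} {u : Fin n → ℤ} {i j : Fin n} (hij : i ≠ j)
    (hj : u j ≠ 0) (hji : (u j).natAbs ≤ (u i).natAbs) (hodd : Odd (u i + u j)) :
    ∃ v, EvenRowOpStep u v ∧ ∑ t, (v t).natAbs < ∑ t, (u t).natAbs := by
  obtain ⟨k, hk⟩ := Int.exists_natAbs_add_two_mul_mul_lt hj hodd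
  refine ⟨_, ⟨i, j, k, hij, rfl⟩, Finset.sum_lt_sum (fun t _ => ?_) ⟨i, Finset.mem_univ _, ?_⟩⟩
  · obtain rfl | ht := eq_or_ne t i
    · simp only [Function.update_self]; omega
    · simp [Function.update_of_ne ht]
  · simp only [Function.update_self]; omega

theorem exists_reflTransGen_evenRowOpStep_smul_single {n : ℕ} [NeZero n] (u : Fin n → ℤ)
    (hmod : (fun t => (u t : ZMod 2)) = Pi.single 0 1)
    (hspan : Ideal.span (Set.range u) = ⊤) :
    ∃ ε : ℤ, (ε = 1 ∨ ε = -1) ∧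
      Relation.ReflTransGen EvenRowOpStep u (ε • Pi.single (0 : Fin n) 1) := by
  induction hN : ∑ t, (u t).natAbs using Nat.strong_induction_on generalizing u with
  | _ N ih =>
    by_cases hzero : ∀ i ≠ 0, u i = 0
    · have hu : u = u 0 • Pi.single 0 1 := by
        funext t
        obtain rfl | ht := eq_or_ne t 0
        · simp
        · simp [hzero t ht, ht]
      refine ⟨u 0, Int.isUnit_iff.mp (Ideal.isUnit_of_span_range_eq_top hspan hzero), ?_⟩
      rw [← hu]
    push Not at hzero
    obtain ⟨i, hi, hui⟩ := hzero
    have hu0 : Odd (u 0) := ZMod.intCast_eq_one_iff_odd.mp (by simpa using congrFun hmod 0)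
    have hui_even : Even (u i) :=
      ZMod.intCast_eq_zero_iff_even.mp (by simpa [hi] using congrFun hmod i)
    obtain ⟨v, hstep, hlt⟩ : ∃ v, EvenRowOpStep u v ∧ ∑ t, (v t).natAbs < N := by
      subst hN
      rcases le_total (u 0).natAbs (u i).natAbs with hle | hle
      · exact exists_evenRowOpStep_sum_natAbs_lt hi (by rintro h; simp [h] at hu0) hle
          (hui_even.add_odd hu0)
      · exact exists_evenRowOpStep_sum_natAbs_lt hi.symm hui hle (hu0.add_even hui_even)
    obtain ⟨ε, hε, hv⟩ := ih _ hlt v (hstep.cast_zmod_two_eq.trans hmod)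
      (hstep.span_range_eq.trans hspan) rfl
    exact ⟨ε, hε, .head hstep hv⟩

/-- Any column vector that is the first column of a matrix in `Γ_n[2]` can be
reduced to `±e_1` by a sequence of even row operations. -/
theorem first_column_reduces_to_e1 {n : ℕ} [NeZero n] (u : Fin n → ℤ)
    (hu : ∃ g ∈ congruence2 n,
      ∀ i : Fin n, (g : Matrix (Fin n) (Fin n) ℤ) i 0 = u i) :
    ∃ ε : ℤ, (ε = 1 ∨ ε = -1) ∧
      Relation.ReflTransGen EvenRowOpStep u (ε • Pi.single (0 : Fin n) 1) := by
  obtain ⟨g, hg, hgu⟩ := hu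
  obtain rfl : (fun i => (g : Matrix (Fin n) (Fin n) ℤ) i 0) = u := funext hgu
  exact exists_reflTransGen_evenRowOpStep_smul_single _ (cast_col_of_mem_congruence2 hg 0)
    (g.span_range_col_eq_top 0)
end

section
/- The intersection of the inner automorphism group Inn(F_n) with the palindromic automorphism group ΠA_n is trivial for all n ≥ 1. -/
theorem commute_inv_mul_of_conj_eq {G : Type*} [Group G] {g h y : G}
    (e : g * y * g⁻¹ = h * y * h⁻¹) : Commute y (h⁻¹ * g) := by
  have e' : g * y = h * y * h⁻¹ * g := mul_inv_eq_iff_eq_mul.mp e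
  calc y * (h⁻¹ * g) = h⁻¹ * (h * y * h⁻¹ * g) := by group
    _ = h⁻¹ * g * y := by rw [← e', mul_assoc]

namespace FreeGroup

variable {α : Type*}

def inversion : FreeGroup α →* FreeGroup α := lift fun a => (of a)⁻¹

@[simp]
theorem inversion_of (a : α) : inversion (of a) = (of a)⁻¹ := lift_apply_of

theorem inversion_mk (L : List (α × Bool)) :
    inversion (mk L) = mk (L.map fun p => (p.1, !p.2)) := by
  rw [inversion, lift_mk, ← lift_of_apply (mk _), lift_mk, List.map_map]
  congr 1
  refine List.map_congr_left fun ⟨x, b⟩ _ => ?_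
  cases b <;> simp

theorem IsReduced.map_flip {L : List (α × Bool)} (h : IsReduced L) :
    IsReduced (L.map fun p => (p.1, !p.2)) := by
  unfold IsReduced at *
  rw [List.isChain_map]
  exact h.imp fun a b hab e => by simpa using hab e

theorem commute_of_of_subsingleton [Subsingleton α] (x : α) (g : FreeGroup α) :
    Commute (of x) g := by
  induction g using FreeGroup.induction_on with
  | C1 => exact Commute.one_right _
  | of y => rw [Subsingleton.elim x y]
  | inv_of _ h => exact h.inv_right
  | mul _ _ hu hv => exact hu.mul_right hv

variable [DecidableEq α]

theorem toWord_inversion (g : FreeGroup α) :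
    (inversion g).toWord = g.toWord.map fun p => (p.1, !p.2) := by
  conv_lhs => rw [← mk_toWord (x := g)]
  rw [inversion_mk, toWord_mk, isReduced_toWord.map_flip.reduce_eq]

theorem inversion_eq_inv_of_toWord_reverse_eq {g : FreeGroup α}
    (h : g.toWord.reverse = g.toWord) : inversion g = g⁻¹ := by
  rw [← toWord_inj, toWord_inversion, toWord_inv, invRev, ← List.map_reverse, h]

theorem eq_one_of_inversion_eq_self {g : FreeGroup α} (h : inversion g = g) : g = 1 := by
  rw [← toWord_eq_nil_iff]
  have hw := congrArg toWord h
  rw [toWord_inversion] at hw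
  cases hL : g.toWord with
  | nil => rfl
  | cons p t =>
    rw [hL, List.map_cons, List.cons.injEq] at hw
    simpa using congrArg Prod.snd hw.1

theorem toWord_of_mul {x : α} {g : FreeGroup α} (h : ∀ p ∈ g.toWord.head?, p.1 ≠ x) :
    (of x * g).toWord = (x, true) :: g.toWord := by
  rw [toWord_mul, toWord_of, List.singleton_append, IsReduced.reduce_eq]
  cases hL : g.toWord with
  | nil => exact IsReduced.singleton
  | cons p t =>
    rw [hL] at h
    exact isReduced_cons_cons.mpr ⟨fun e => absurd e.symm (h p rfl), hL ▸ isReduced_toWord⟩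

/-- Otherwise `(x, true) :: w` is the word of `g * of x`, a sublist of `w ++ [(x, true)]` of the
same length, hence equal to it, and `w` would start with `(x, true)`. -/
theorem fst_head_toWord_of_commute {x : α} {g : FreeGroup α} (hc : Commute (of x) g)
    {p : α × Bool} (hp : p ∈ g.toWord.head?) : p.1 = x := by
  by_contra hpx
  have hsub := toWord_mul_sublist g (of x)
  rw [← hc.eq, toWord_of_mul fun q hq => Option.mem_unique hq hp ▸ hpx, toWord_of] at hsub
  obtain ⟨t, hL⟩ := List.head?_eq_some_iff.mp hp
  rw [hL, List.cons_append] at hsub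
  exact hpx (congrArg Prod.fst (List.cons.inj (hsub.eq_of_length (by simp))).1).symm

theorem eq_one_of_commute_of_commute {a b : α} (hab : a ≠ b) {g : FreeGroup α}
    (ha : Commute (of a) g) (hb : Commute (of b) g) : g = 1 := by
  rw [← toWord_eq_nil_iff]
  cases hL : g.toWord with
  | nil => rfl
  | cons p t =>
    have hp : p ∈ g.toWord.head? := by simp [hL]
    exact absurd ((fst_head_toWord_of_commute ha hp).symm.trans
      (fst_head_toWord_of_commute hb hp)) hab

end FreeGroup

theorem inn_inter_palindromic_trivial_general {n : ℕ}
    (α : MulAut (FreeGroup (Fin n)))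
    (hpal : ∀ i : Fin n, IsPalindrome (α (FreeGroup.of i)))
    (hinn : ∃ g : FreeGroup (Fin n), ∀ x, α x = g * x * g⁻¹) :
    α = 1 := by
  obtain ⟨g, hg⟩ := hinn
  have hc : ∀ i, Commute (FreeGroup.of i) (g⁻¹ * FreeGroup.inversion g) := fun i => by
    have e := FreeGroup.inversion_eq_inv_of_toWord_reverse_eq (hpal i)
    rw [hg, map_mul, map_mul, map_inv, FreeGroup.inversion_of, conj_inv] at e
    exact Commute.inv_left_iff.mp (commute_inv_mul_of_conj_eq e)
  have hg_comm : ∀ i, Commute (FreeGroup.of i) g := by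
    rcases subsingleton_or_nontrivial (Fin n) with _ | _
    · exact fun i => FreeGroup.commute_of_of_subsingleton i g
    · obtain ⟨a, b, hab⟩ := exists_pair_ne (Fin n)
      have hfix := inv_mul_eq_one.mp (FreeGroup.eq_one_of_commute_of_commute hab (hc a) (hc b))
      simp [FreeGroup.eq_one_of_inversion_eq_self hfix.symm]
  refine MulEquiv.toMonoidHom_injective (FreeGroup.ext_hom _ _ fun i => ?_)
  simp [hg, ← (hg_comm i).eq]

/-- The intersection of `Inn(F_n)` with the palindromic automorphism group
`ΠA_n` is trivial, for all `n ≥ 1`: an inner automorphism sending every basis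
element to a palindrome is the identity. -/
theorem inn_inter_palindromic_trivial {n : ℕ} (hn : 1 ≤ n)
    (α : MulAut (FreeGroup (Fin n)))
    (hpal : ∀ i : Fin n, IsPalindrome (α (FreeGroup.of i)))
    (hinn : ∃ g : FreeGroup (Fin n), ∀ x, α x = g * x * g⁻¹) :
    α = 1 :=
  inn_inter_palindromic_trivial_general α hpal hinn
end

section
/- If w_1, ..., w_k are elements of a basis of ℤ^n (k ≤ n) and the mod 2 reduction of w_i equals the i-th standard basis vector of (ℤ/2)^n for each i, then {w_1,...,w_k} extends to a basis {w_1,...,w_n} of ℤ^n lying in the Γ_n[2]-orbit of the standard basis. -/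
open Matrix

namespace Matrix

variable {ι : Type} [Fintype ι] [DecidableEq ι]

theorem exists_isUnit_det_map_intCast_eq (Q : Matrix ι ι (ZMod 2)) (hQ : Q.det ≠ 0) :
    ∃ S : Matrix ι ι ℤ, IsUnit S.det ∧ S.map (Int.cast : ℤ → ZMod 2) = Q := by
  have eq_one_of_ne_zero : ∀ a : ZMod 2, a ≠ 0 → a = 1 := by decide
  refine diagonal_transvection_induction_of_det_ne_zero
    (fun Q => ∃ S : Matrix ι ι ℤ, IsUnit S.det ∧ S.map (Int.cast : ℤ → ZMod 2) = Q) Q hQ ?_ ?_ ?_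
  · intro D hD
    have hD1 : D = fun _ => 1 := funext fun i =>
      eq_one_of_ne_zero _
        (mt (Finset.prod_eq_zero (Finset.mem_univ i)) (by rwa [det_diagonal] at hD))
    exact ⟨1, by simp, by simp [hD1]⟩
  · rintro ⟨i, j, hij, c⟩
    refine ⟨transvection i j (c.val : ℤ), by simp [det_transvection_of_ne _ _ hij], ?_⟩
    ext a b
    by_cases h : a = b <;> simp [transvection, Matrix.single, h, apply_ite (Int.cast : ℤ → ZMod 2)]
  · rintro A B - - ⟨SA, hSA, rfl⟩ ⟨SB, hSB, rfl⟩
    exact ⟨SA * SB, by simpa [det_mul] using hSA.mul hSB,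
      Matrix.map_mul (f := Int.castRingHom (ZMod 2))⟩

theorem exists_isUnit_det_map_intCast_eq_of_mulVec_single_eq (s : Set ι) (B : Matrix ι ι (ZMod 2))
    (hB : B.det ≠ 0) (hBs : ∀ j ∈ s, B *ᵥ Pi.single j 1 = Pi.single j 1) :
    ∃ U : Matrix ι ι ℤ, IsUnit U.det ∧ U.map (Int.cast : ℤ → ZMod 2) = B ∧
      ∀ j ∈ s, U *ᵥ Pi.single j 1 = Pi.single j 1 := by
  classical
  have hBcol : ∀ j ∈ s, ∀ i, B i j = (1 : Matrix ι ι (ZMod 2)) i j := fun j hj i => by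
    simpa [mulVec_single_one, one_apply, Pi.single_apply] using congrFun (hBs j hj) i
  have hBdet := twoBlockTriangular_det B (· ∈ s) fun i hi j hj => by
    rw [hBcol j hj, one_apply_ne (ne_of_mem_of_not_mem hj hi).symm]
  obtain ⟨S, hS, hSB⟩ := exists_isUnit_det_map_intCast_eq (toSquareBlockProp B (· ∉ s))
    (right_ne_zero_of_mul (hBdet ▸ hB))
  -- `B` is block upper triangular along `s ⊔ sᶜ` with upper-left block `1`: lift its
  -- upper-right block entrywise and its lower-right block by the previous lemma.
  let U : Matrix ι ι ℤ := of fun i j =>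
    if hj : j ∈ s then (1 : Matrix ι ι ℤ) i j
    else if hi : i ∈ s then ((B i j).val : ℤ) else S ⟨i, hi⟩ ⟨j, hj⟩
  have hUcol : ∀ j ∈ s, U *ᵥ Pi.single j 1 = Pi.single j 1 := fun j hj => by
    ext i
    simp [U, hj, one_apply, Pi.single_apply]
  have hUdet : U.det = S.det := by
    rw [twoBlockTriangular_det U (· ∈ s) fun i hi j hj => by
      simp [U, hj, one_apply_ne (ne_of_mem_of_not_mem hj hi).symm]]
    have h1 : toSquareBlockProp U (· ∈ s) = 1 := by
      ext i j
      simp [U, toSquareBlockProp_def, one_apply, Subtype.ext_iff]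
    have h2 : toSquareBlockProp U (· ∉ s) = S := by
      ext i j
      simp [U, toSquareBlockProp_def, i.2, j.2]
    rw [h1, h2, det_one, one_mul]
  refine ⟨U, hUdet ▸ hS, ?_, hUcol⟩
  ext i j
  by_cases hj : j ∈ s
  · simp [U, hj, hBcol j hj, one_apply, apply_ite (Int.cast : ℤ → ZMod 2)]
  by_cases hi : i ∈ s
  · simp [U, hj, hi]
  · simpa [U, hj, hi, toSquareBlockProp_def] using congrFun (congrFun hSB ⟨i, hi⟩) ⟨j, hj⟩

theorem GeneralLinearGroup.exists_mem_ker_map_mulVec_single_eq (s : Set ι) (A : GL ι ℤ)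
    (hA : ∀ j ∈ s, (GeneralLinearGroup.map (Int.castRingHom (ZMod 2)) A : Matrix ι ι (ZMod 2)) *ᵥ
      Pi.single j 1 = Pi.single j 1) :
    ∃ M ∈ (GeneralLinearGroup.map (n := ι) (Int.castRingHom (ZMod 2))).ker,
      ∀ j ∈ s, (M : Matrix ι ι ℤ) *ᵥ Pi.single j 1 = (A : Matrix ι ι ℤ) *ᵥ Pi.single j 1 := by
  set Ā := GeneralLinearGroup.map (Int.castRingHom (ZMod 2)) A
  have hĀinv : ∀ j ∈ s, ((Ā⁻¹ : GL ι (ZMod 2)) : Matrix ι ι (ZMod 2)) *ᵥ Pi.single j 1 =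
      Pi.single j 1 := fun j hj => by
    conv_lhs => rw [← hA j hj, mulVec_mulVec, ← Units.val_mul, inv_mul_cancel, Units.val_one,
      one_mulVec]
  obtain ⟨U, hU, hUB, hUs⟩ :=
    exists_isUnit_det_map_intCast_eq_of_mulVec_single_eq s _ (isUnits_det_units Ā⁻¹).ne_zero hĀinv
  let U' := ((isUnit_iff_isUnit_det U).mpr hU).unit
  have hU' : GeneralLinearGroup.map (Int.castRingHom (ZMod 2)) U' = Ā⁻¹ := Units.ext hUB
  refine ⟨A * U', ?_, fun j hj => ?_⟩
  · rw [MonoidHom.mem_ker, map_mul, hU', mul_inv_cancel]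
  · rw [Units.val_mul, IsUnit.unit_spec, ← mulVec_mulVec, hUs j hj]

end Matrix

theorem Module.Basis.exists_generalLinearGroup_mulVec_single_eq {ι R : Type*} [Fintype ι]
    [DecidableEq ι] [CommRing R] (c : Basis ι R (ι → R)) :
    ∃ A : GL ι R, ∀ j, (A : Matrix ι ι R) *ᵥ Pi.single j 1 = c j := by
  let _ := (Pi.basisFun R ι).invertibleToMatrix c
  refine ⟨unitOfInvertible ((Pi.basisFun R ι).toMatrix c), fun j => ?_⟩
  ext i
  simp [Basis.toMatrix_apply]

/-- A partial π-basis `w_1, …, w_k` of `ℤⁿ` (members of some basis of `ℤⁿ`,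
with `w_i` reducing mod 2 to the `i`-th standard basis vector) extends to a
basis of `ℤⁿ` in the `Γ_n[2]`-orbit of the standard basis: there is
`M ∈ Γ_n[2]` whose `i`-th column is `w_i` for `i ≤ k`. -/
theorem partial_pi_basis_extends {n k : ℕ} (hk : k ≤ n)
    (w : Fin k → (Fin n → ℤ))
    (hpartial : ∃ b : Module.Basis (Fin n) ℤ (Fin n → ℤ),
      ∀ i : Fin k, ∃ j : Fin n, b j = w i)
    (hmod2 : ∀ (i : Fin k) (j : Fin n),
      ((w i j : ZMod 2)) = if (j : ℕ) = (i : ℕ) then 1 else 0) :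
    ∃ M ∈ congruence2 n,
      ∀ i : Fin k,
        (fun j => (M : Matrix (Fin n) (Fin n) ℤ) j (Fin.castLE hk i)) = w i := by
  obtain ⟨b, hb⟩ := hpartial
  choose f hf using hb
  have hw : ∀ i, (Int.cast ∘ w i : Fin n → ZMod 2) = Pi.single (Fin.castLE hk i) 1 := fun i => by
    ext j
    simp [hmod2, Pi.single_apply, Fin.ext_iff]
  have hf_inj : Function.Injective f := fun i₁ i₂ h => by
    have hmod2₁₂ := hmod2 i₂ (Fin.castLE hk i₁)
    rw [← hf, ← h, hf, hmod2] at hmod2₁₂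
    simpa [Fin.val_inj] using hmod2₁₂
  obtain ⟨σ, hσ⟩ := Equiv.Perm.exists_extending_pair _ f (Fin.castLE_injective hk) hf_inj
  obtain ⟨A, hA⟩ := (b.reindex σ.symm).exists_generalLinearGroup_mulVec_single_eq
  have hAw : ∀ i, (A : Matrix _ _ ℤ) *ᵥ Pi.single (Fin.castLE hk i) 1 = w i := by
    simp [hA, hσ, hf]
  obtain ⟨M, hM, hMA⟩ := GeneralLinearGroup.exists_mem_ker_map_mulVec_single_eq
    (Set.range (Fin.castLE hk)) A <| by
      rintro _ ⟨i, rfl⟩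
      rw [mulVec_single_one, ← hw i, ← hAw i, mulVec_single_one]
      rfl
  refine ⟨M, hM, fun i => ?_⟩
  rw [← hAw i, ← hMA _ (Set.mem_range_self i), mulVec_single_one]
  rfl
end

section
/- The identity [P_ij, P_j1]·P_i1^2 = [P_ij, P_i1^{-1}] holds in Aut(F_n) for distinct indices 1, i, j with n ≥ 3. -/
/-- `φ` is the elementary palindromic automorphism `P_ab`: it sends `x_a` to
`x_b x_a x_b` and fixes the other generators. -/
def IsElemPal {n : ℕ} (φ : MulAut (FreeGroup (Fin n))) (a b : Fin n) : Prop :=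
  φ (FreeGroup.of a) = FreeGroup.of b * FreeGroup.of a * FreeGroup.of b ∧
  ∀ c : Fin n, c ≠ a → φ (FreeGroup.of c) = FreeGroup.of c

lemma aut_ext_of {n : ℕ} {φ ψ : MulAut (FreeGroup (Fin n))}
    (h : ∀ c, φ (FreeGroup.of c) = ψ (FreeGroup.of c)) : φ = ψ := by
  apply MulEquiv.ext
  intro x
  exact DFunLike.congr_fun (FreeGroup.ext_hom φ.toMonoidHom ψ.toMonoidHom h) x

lemma inv_pal_apply {n : ℕ} {φ : MulAut (FreeGroup (Fin n))} {a b : Fin n}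
    (h : IsElemPal φ a b) (hba : b ≠ a) :
    φ⁻¹ (FreeGroup.of a) =
      (FreeGroup.of b)⁻¹ * FreeGroup.of a * (FreeGroup.of b)⁻¹ := by
  apply φ.injective
  rw [MulAut.apply_inv_self]
  simp [map_mul, map_inv, h.1, h.2 b hba]
  group

lemma inv_pal_fix {n : ℕ} {φ : MulAut (FreeGroup (Fin n))} {a b : Fin n}
    (h : IsElemPal φ a b) (c : Fin n) (hc : c ≠ a) :
    φ⁻¹ (FreeGroup.of c) = FreeGroup.of c := by
  apply φ.injective
  rw [MulAut.apply_inv_self, h.2 c hc]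

/-- The identity `[P_ij, P_j1] · P_i1² = [P_ij, P_i1⁻¹]` in `Aut(F_n)`,
`n ≥ 3`, for pairwise distinct indices `1, i, j` (here `a` plays the role of
the index `1`). -/
theorem doubled_commutator_identity {n : ℕ} (hn : 3 ≤ n)
    (P : Fin n → Fin n → MulAut (FreeGroup (Fin n)))
    (hP : ∀ a b : Fin n, a ≠ b → IsElemPal (P a b) a b)
    (a i j : Fin n) (hai : a ≠ i) (haj : a ≠ j) (hij : i ≠ j) :
    (P i j * P j a * (P i j)⁻¹ * (P j a)⁻¹) * (P i a) ^ 2 =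
      P i j * (P i a)⁻¹ * (P i j)⁻¹ * ((P i a)⁻¹)⁻¹ := by
  have hij' := hP i j hij
  have hja := hP j a haj.symm
  have hia := hP i a hai.symm
  have e1 := hij'.1
  have e2 := hij'.2
  have f1 := hja.1
  have f2 := hja.2
  have g1 := hia.1
  have g2 := hia.2
  have e1' := inv_pal_apply hij' hij.symm
  have e2' := inv_pal_fix hij'
  have f1' := inv_pal_apply hja haj
  have f2' := inv_pal_fix hja
  have g1' := inv_pal_apply hia hai
  have g2' := inv_pal_fix hia
  have n1 : i ≠ a := hai.symm
  have n2 : j ≠ a := haj.symm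
  have n3 : j ≠ i := hij.symm
  apply aut_ext_of
  intro c
  simp only [pow_two, MulAut.mul_apply, inv_inv]
  by_cases hci : c = i
  · subst hci
    simp only [map_mul, map_inv, e1, f1, g1, e1', f1', g1', e2, f2, g2, e2', f2', g2',
      hai, haj, hij, n1, n2, n3, ne_eq, not_false_iff]
    group
  · by_cases hcj : c = j
    · subst hcj
      simp only [map_mul, map_inv, e1, f1, g1, e1', f1', g1', e2, f2, g2, e2', f2', g2',
        hai, haj, hij, n1, n2, n3, ne_eq, not_false_iff]
      group
    · by_cases hca : c = a
      · subst hca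
        simp only [map_mul, map_inv, e1, f1, g1, e1', f1', g1', e2, f2, g2, e2', f2', g2',
          hai, haj, hij, n1, n2, n3, ne_eq, not_false_iff]
      · simp only [e2 _ hci, f2 _ hcj, g2 _ hci, e2' _ hci, f2' _ hcj, g2' _ hci]
end
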